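/- Theorem 4.2: for each i with 1 ≤ i ≤ m, the iterate ξ_{i+1} solves the first i equations of the stochastic system pointwise: for every l with 1 ≤ l ≤ i and every ω ∈ Ω, a_lᵀ ξ_{i+1}(ω) = η_l(ω). -/

import Mathlib

/-!
The Abaffian update `H ↦ H - (wᵀ H a)⁻¹ (H a)(wᵀ H)` sends `a` to the kernel and keeps the old
kernel, so `H_j a_l = 0` for `l < j`. Hence the search vector `p_i = H_iᵀ z_i` is orthogonal to
`a_1, …, a_{i-1}`: step `i` leaves the residuals of the earlier equations untouched, and its step
length is chosen to make the `i`-th residual vanish. Everything holds for each `ω` separately.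
-/

open Matrix MeasureTheory ProbabilityTheory

section AbaffianUpdate

variable {K ι : Type*} [Field K] [Fintype ι]

def abaffianUpdate (H : Matrix ι ι K) (a w : ι → K) : Matrix ι ι K :=
  H - (w ⬝ᵥ H *ᵥ a)⁻¹ • vecMulVec (H *ᵥ a) (w ᵥ* H)

theorem abaffianUpdate_mulVec (H : Matrix ι ι K) (a w x : ι → K) :
    abaffianUpdate H a w *ᵥ x = H *ᵥ x - ((w ⬝ᵥ H *ᵥ x) / (w ⬝ᵥ H *ᵥ a)) • H *ᵥ a := by
  rw [abaffianUpdate, sub_mulVec, smul_mulVec, vecMulVec_mulVec, op_smul_eq_smul, smul_smul,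
    ← dotProduct_mulVec, div_eq_inv_mul]

theorem abaffianUpdate_mulVec_self {H : Matrix ι ι K} {a w : ι → K} (h : w ⬝ᵥ H *ᵥ a ≠ 0) :
    abaffianUpdate H a w *ᵥ a = 0 := by
  rw [abaffianUpdate_mulVec, div_self h, one_smul, sub_self]

theorem abaffianUpdate_mulVec_eq_zero {H : Matrix ι ι K} {x : ι → K} (a w : ι → K)
    (hx : H *ᵥ x = 0) : abaffianUpdate H a w *ᵥ x = 0 := by
  rw [abaffianUpdate_mulVec, hx, dotProduct_zero, zero_div, zero_smul, sub_zero]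

theorem abaffian_mulVec_eq_zero_of_lt {m : ℕ} {a w : ℕ → ι → K} {H : ℕ → Matrix ι ι K}
    (hw : ∀ i, 1 ≤ i → i ≤ m → w i ⬝ᵥ H i *ᵥ a i ≠ 0)
    (hrec : ∀ i, 1 ≤ i → i ≤ m → H (i + 1) = abaffianUpdate (H i) (a i) (w i))
    {l j : ℕ} (hl : 1 ≤ l) (hlj : l < j) (hj : j ≤ m + 1) : H j *ᵥ a l = 0 := by
  induction j, hlj using Nat.le_induction with
  | base => rw [hrec l hl (by omega), abaffianUpdate_mulVec_self (hw l hl (by omega))]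
  | succ j hlj ih =>
    rw [hrec j (by omega) (by omega), abaffianUpdate_mulVec_eq_zero _ _ (ih (by omega))]

theorem dotProduct_sub_div_smul_eq {a p x : ι → K} (b : K) (hp : a ⬝ᵥ p ≠ 0) :
    a ⬝ᵥ (x - ((a ⬝ᵥ x - b) / (a ⬝ᵥ p)) • p) = b := by
  rw [dotProduct_sub, dotProduct_smul, smul_eq_mul, div_mul_cancel₀ _ hp, sub_sub_cancel]

theorem dotProduct_eq_of_orthogonal_steps {m : ℕ} {a p x : ℕ → ι → K} {b c : ℕ → K}
    (hx : ∀ i, 1 ≤ i → i ≤ m → x (i + 1) = x i - c i • p i)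
    (horth : ∀ i l, 1 ≤ l → l < i → i ≤ m → a l ⬝ᵥ p i = 0)
    (hsolve : ∀ i, 1 ≤ i → i ≤ m → a i ⬝ᵥ x (i + 1) = b i)
    {i l : ℕ} (hl : 1 ≤ l) (hli : l ≤ i) (hi : i ≤ m) : a l ⬝ᵥ x (i + 1) = b l := by
  induction i, hli using Nat.le_induction with
  | base => exact hsolve l hl hi
  | succ i hli ih =>
    rw [hx (i + 1) (by omega) hi, dotProduct_sub, dotProduct_smul,
      horth (i + 1) l hl (by omega) hi, smul_zero, sub_zero, ih (by omega)]

end AbaffianUpdate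

theorem absS_xi_solves_first_equations_general
    (m n : ℕ)
    (a z w p : ℕ → (Fin n → ℝ))
    (H : ℕ → Matrix (Fin n) (Fin n) ℝ)
    (hz : ∀ i, 1 ≤ i → i ≤ m → z i ⬝ᵥ (H i).mulVec (a i) ≠ 0)
    (hw : ∀ i, 1 ≤ i → i ≤ m → w i ⬝ᵥ (H i).mulVec (a i) ≠ 0)
    (hrec : ∀ i, 1 ≤ i → i ≤ m →
      H (i + 1) = H i - (w i ⬝ᵥ (H i).mulVec (a i))⁻¹ •
        Matrix.vecMulVec ((H i).mulVec (a i)) (Matrix.vecMul (w i) (H i)))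
    (hp : ∀ i, 1 ≤ i → i ≤ m → p i = Matrix.mulVec (H i)ᵀ (z i))
    {Ω : Type*}
    (η : ℕ → Ω → ℝ)
    (ξ : ℕ → Ω → (Fin n → ℝ)) (τ α : ℕ → Ω → ℝ)
    (hτ : ∀ i, 1 ≤ i → i ≤ m → ∀ ω, τ i ω = a i ⬝ᵥ ξ i ω - η i ω)
    (hα : ∀ i, 1 ≤ i → i ≤ m → ∀ ω, α i ω = τ i ω / (a i ⬝ᵥ p i))
    (hξ : ∀ i, 1 ≤ i → i ≤ m → ∀ ω, ξ (i + 1) ω = ξ i ω - α i ω • p i) :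
    ∀ i, 1 ≤ i → i ≤ m → ∀ l, 1 ≤ l → l ≤ i → ∀ ω, a l ⬝ᵥ ξ (i + 1) ω = η l ω := by
  have hap : ∀ i l, 1 ≤ i → i ≤ m → a l ⬝ᵥ p i = z i ⬝ᵥ H i *ᵥ a l := fun i l hi him => by
    rw [hp i hi him, dotProduct_transpose_mulVec]
  have horth : ∀ i l, 1 ≤ l → l < i → i ≤ m → a l ⬝ᵥ p i = 0 := fun i l hl hli him => by
    rw [hap i l (by omega) him,
      abaffian_mulVec_eq_zero_of_lt hw hrec hl hli (by omega), dotProduct_zero]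
  have hsolve : ∀ i, 1 ≤ i → i ≤ m → ∀ ω, a i ⬝ᵥ ξ (i + 1) ω = η i ω := fun i hi him ω => by
    rw [hξ i hi him ω, hα i hi him ω, hτ i hi him ω]
    exact dotProduct_sub_div_smul_eq _ (hap i i hi him ▸ hz i hi him)
  intro i _ him l hl hli ω
  exact dotProduct_eq_of_orthogonal_steps (x := fun i => ξ i ω) (fun i hi him => hξ i hi him ω)
    horth (fun i hi him => hsolve i hi him ω) hl hli him

theorem absS_xi_solves_first_equations
    (m n : ℕ) (hm : 0 < m) (hmn : m ≤ n)
    (a z w p : ℕ → (Fin n → ℝ))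
    (H : ℕ → Matrix (Fin n) (Fin n) ℝ)
    (hH1 : IsUnit (H 1))
    (hz : ∀ i, 1 ≤ i → i ≤ m → z i ⬝ᵥ (H i).mulVec (a i) ≠ 0)
    (hw : ∀ i, 1 ≤ i → i ≤ m → w i ⬝ᵥ (H i).mulVec (a i) ≠ 0)
    (hrec : ∀ i, 1 ≤ i → i ≤ m →
      H (i + 1) = H i - (w i ⬝ᵥ (H i).mulVec (a i))⁻¹ •
        Matrix.vecMulVec ((H i).mulVec (a i)) (Matrix.vecMul (w i) (H i)))
    (hp : ∀ i, 1 ≤ i → i ≤ m → p i = Matrix.mulVec (H i)ᵀ (z i))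
    {Ω : Type*} [MeasurableSpace Ω] (P : Measure Ω) [IsProbabilityMeasure P]
    (η : ℕ → Ω → ℝ) (v : ℕ → ℝ)
    (hηmeas : ∀ i, Measurable (η i))
    (hηindep : iIndepFun η P)
    (hηlaw : ∀ i, 1 ≤ i → i ≤ m → Measure.map (η i) P = gaussianReal (v i) 1)
    (ξ₁ : Fin n → ℝ)
    (ξ : ℕ → Ω → (Fin n → ℝ)) (τ α : ℕ → Ω → ℝ)
    (hξ1 : ξ 1 = fun _ => ξ₁)
    (hτ : ∀ i, 1 ≤ i → i ≤ m → ∀ ω, τ i ω = a i ⬝ᵥ ξ i ω - η i ω)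
    (hα : ∀ i, 1 ≤ i → i ≤ m → ∀ ω, α i ω = τ i ω / (a i ⬝ᵥ p i))
    (hξ : ∀ i, 1 ≤ i → i ≤ m → ∀ ω, ξ (i + 1) ω = ξ i ω - α i ω • p i) :
    ∀ i, 1 ≤ i → i ≤ m → ∀ l, 1 ≤ l → l ≤ i → ∀ ω, a l ⬝ᵥ ξ (i + 1) ω = η l ω :=
  absS_xi_solves_first_equations_general m n a z w p H hz hw hrec hp η ξ τ α hτ hα hξ
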